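/- Let x and y be nonzero precision-p binary floating-point numbers with exponents e_x, e_y. Then |y| ≤ (1/2)·ulp(x) if and only if e_x - e_y > p, or (e_x - e_y = p and |y| = 2^(e_y)). -/

import Mathlib

/-- x is a nonzero precision-p binary float with exponent e:
x = ±m·2^(e-(p-1)) with 2^(p-1) ≤ m < 2^p. -/
def FpVal (p : ℕ) (e : ℤ) (x : ℝ) : Prop :=
  ∃ m : ℤ, (2 : ℤ) ^ (p - 1) ≤ |m| ∧ |m| < (2 : ℤ) ^ p ∧
    x = (m : ℝ) * (2 : ℝ) ^ (e - ((p : ℤ) - 1))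

/-!
A float with exponent `e` lies in the binade `[2^e, 2^(e+1))`, and `(1/2)·ulp(x) = 2^(ex-p)` is a
power of two. A number of a binade is at most a power of two exactly when that power lies above
the binade, or is its lower end and the number equals it.
-/

open Set

theorem le_zpow_iff_of_mem_Ico {K : Type*} [Field K] [LinearOrder K] [IsStrictOrderedRing K]
    {b t : K} (hb : 1 < b) {e k : ℤ} (ht : t ∈ Ico (b ^ e) (b ^ (e + 1))) :
    t ≤ b ^ k ↔ e < k ∨ (e = k ∧ t = b ^ e) := by
  constructor
  · intro h
    rcases ((zpow_le_zpow_iff_right₀ hb).1 (ht.1.trans h)).lt_or_eq with hlt | rfl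
    · exact .inl hlt
    · exact .inr ⟨rfl, le_antisymm h ht.1⟩
  · rintro (hlt | ⟨rfl, rfl⟩)
    · exact ht.2.le.trans (zpow_le_zpow_right₀ hb.le (by omega))
    · exact le_rfl

theorem FpVal.abs_mem_Ico {p : ℕ} {e : ℤ} {x : ℝ} (hx : FpVal p e x) :
    |x| ∈ Ico ((2 : ℝ) ^ e) (2 ^ (e + 1)) := by
  obtain ⟨m, hm_ge, hm_lt, rfl⟩ := hx
  obtain _ | n := p
  · simp only [zero_tsub, pow_zero] at hm_ge hm_lt
    exact absurd hm_ge hm_lt.not_ge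
  have hm_ge' : (2 : ℝ) ^ n ≤ |(m : ℝ)| := by exact_mod_cast hm_ge
  have hm_lt' : |(m : ℝ)| < 2 ^ (n + 1) := by exact_mod_cast hm_lt
  have hscale : (0 : ℝ) < 2 ^ (e - n) := zpow_pos two_pos _
  have hsplit : ∀ j : ℕ, (2 : ℝ) ^ j * 2 ^ (e - n) = 2 ^ (e + (j - n : ℤ)) := fun j => by
    rw [← zpow_natCast, ← zpow_add₀ two_ne_zero]; ring_nf
  rw [Nat.cast_add_one, add_sub_cancel_right, abs_mul, abs_of_pos hscale]
  refine ⟨?_, ?_⟩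
  · simpa [hsplit] using mul_le_mul_of_nonneg_right hm_ge' hscale.le
  · simpa [hsplit] using mul_lt_mul_of_pos_right hm_lt' hscale

theorem qd_dominates_iff_general (p : ℕ) (y : ℝ) (ex ey : ℤ)
    (hy : FpVal p ey y) :
    |y| ≤ (2 : ℝ) ^ (ex - (p : ℤ)) ↔
      (ex - ey > (p : ℤ) ∨ (ex - ey = (p : ℤ) ∧ |y| = (2 : ℝ) ^ ey)) := by
  rw [le_zpow_iff_of_mem_Ico one_lt_two hy.abs_mem_Ico,
    show ey < ex - p ↔ ex - ey > p by omega, show ey = ex - p ↔ ex - ey = p by omega]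

/-- QD-domination characterization: |y| ≤ (1/2)·ulp(x) iff ex - ey > p, or
ex - ey = p and y is a power of two. -/
theorem qd_dominates_iff (p : ℕ) (hp : 1 ≤ p) (x y : ℝ) (ex ey : ℤ)
    (hx : FpVal p ex x) (hy : FpVal p ey y) :
    |y| ≤ (2 : ℝ) ^ (ex - (p : ℤ)) ↔
      (ex - ey > (p : ℤ) ∨ (ex - ey = (p : ℤ) ∧ |y| = (2 : ℝ) ^ ey)) :=
  qd_dominates_iff_general p y ex ey hy
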